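/- The Poincaré maps Q̄^i and Q^i of the linearized mosquito system, acting on the history spaces ℝ × C([−τ̄^i,0],ℝ) and ℝ × C([−τ_l^i(0),0],ℝ) respectively, have the same spectral radius: r(Q̄^i) = r(Q^i), and this common value is finite. -/

import Mathlib

open MeasureTheory Set

/-!
STATEMENT 8: The Poincaré maps Q̄^i and Q^i of the linearized mosquito system,
acting on ℝ × C([−τ̄^i,0],ℝ) and ℝ × C([−τ_l^i(0),0],ℝ) respectively, have the
same spectral radius, and this common value is finite.
-/

/-- `(Ls, Sm)` is a solution of the linearized mosquito system whose
`S_m`-history lives on `[-r, 0]`. -/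
def IsLinMosqSol (μb μl μm τl τl' : ℝ → ℝ) (r : ℝ) (Ls Sm : ℝ → ℝ) : Prop :=
  ContinuousOn Ls (Set.Ici (0:ℝ)) ∧ ContinuousOn Sm (Set.Ici (-r)) ∧
  ∀ t > (0:ℝ),
    HasDerivAt Ls (μb t * Sm t - μl t * Ls t) t ∧
    HasDerivAt Sm
      ((1 - τl' t) * μb (t - τl t) * Real.exp (-(∫ u in (t - τl t)..t, μl u))
          * Sm (t - τl t) - μm t * Sm t) t

/-- `Q` is the Poincaré (period `w`) map of the linearized mosquito system on
the history space `ℝ × C([-r,0],ℝ)`. -/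
def IsPoincareMap (w : ℝ) (μb μl μm τl τl' : ℝ → ℝ) (r : ℝ)
    (Q : (ℝ × C(Set.Icc (-r) (0:ℝ), ℝ)) →L[ℝ] (ℝ × C(Set.Icc (-r) (0:ℝ), ℝ))) : Prop :=
  (∀ (v : ℝ × C(Set.Icc (-r) (0:ℝ), ℝ)) (Ls Sm : ℝ → ℝ),
    IsLinMosqSol μb μl μm τl τl' r Ls Sm →
    Ls 0 = v.1 → (∀ θ : Set.Icc (-r) (0:ℝ), Sm (θ : ℝ) = v.2 θ) →
    (Q v).1 = Ls w ∧ ∀ θ : Set.Icc (-r) (0:ℝ), (Q v).2 θ = Sm (w + (θ : ℝ))) ∧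
  (∀ v : ℝ × C(Set.Icc (-r) (0:ℝ), ℝ),
    ∃ Ls Sm : ℝ → ℝ, IsLinMosqSol μb μl μm τl τl' r Ls Sm ∧
      Ls 0 = v.1 ∧ ∀ θ : Set.Icc (-r) (0:ℝ), Sm (θ : ℝ) = v.2 θ)

/-!
Since `t ↦ t - τ_l(t)` is increasing, a solution started at time `0` never looks back before
`-τ_l(0)`, and since `τ̄ ≤ w + τ_l(0)` its `[-τ̄, 0]`-segment at time `w` lies after `-τ_l(0)` too.
So with `ρ` the restriction of histories from `[-τ̄, 0]` to `[-τ_l(0), 0]` and `E` the extension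
constant to the left of `-τ_l(0)`, `Q = ρ ∘ (Q̄ ∘ E)` and `Q̄ = (Q̄ ∘ E) ∘ ρ`. The operators `AB`
and `BA` have the same nonzero spectrum, hence the same spectral radius, which is at most `‖Q‖`.
-/

section SwapComposition

variable {𝕜 X Y : Type*} [NormedField 𝕜] [NormedAddCommGroup X] [NormedSpace 𝕜 X]
  [NormedAddCommGroup Y] [NormedSpace 𝕜 Y] (A : X →L[𝕜] Y) (B : Y →L[𝕜] X)

lemma isUnit_algebraMap_sub_comp_of_swap {k : 𝕜} (hk : k ≠ 0)
    (h : IsUnit (algebraMap 𝕜 (X →L[𝕜] X) k - B ∘L A)) :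
    IsUnit (algebraMap 𝕜 (Y →L[𝕜] Y) k - A ∘L B) := by
  obtain ⟨R, hRight, hLeft⟩ := isUnit_iff_exists.mp h
  have hR : ∀ x, B (A (R x)) = k • R x - x := fun x => by
    have hx : k • R x - B (A (R x)) = x := by
      simpa [Algebra.algebraMap_eq_smul_one] using congr($hRight x)
    rw [sub_eq_iff_eq_add.mp hx, add_sub_cancel_left]
  have hL : ∀ x, R (k • x - B (A x)) = x := fun x => by
    simpa [Algebra.algebraMap_eq_smul_one] using congr($hLeft x)
  -- `R = (k - BA)⁻¹` gives `(k - AB)⁻¹ = k⁻¹ (1 + A R B)`, as for `1 - ab` and `1 - ba` in a ring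
  refine isUnit_iff_exists.mpr ⟨k⁻¹ • (1 + A ∘L R ∘L B), ?_, ?_⟩ <;> ext y <;>
    simp only [Algebra.algebraMap_eq_smul_one, mul_apply_eq_comp,
      ContinuousLinearMap.comp_apply, add_apply, sub_apply, smul_apply, one_apply_eq_self]
  · simp only [map_smul, map_add, map_sub, hR]
    match_scalars <;> simp [hk]
  · rw [map_sub B, map_smul B, hL]
    match_scalars <;> simp [hk]

lemma spectrum_comp_diff_zero_comm :
    spectrum 𝕜 (A ∘L B) \ {0} = spectrum 𝕜 (B ∘L A) \ {0} :=
  Subset.antisymm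
    (fun _ ⟨hk, hk0⟩ => ⟨fun h => hk (isUnit_algebraMap_sub_comp_of_swap A B hk0 h), hk0⟩)
    (fun _ ⟨hk, hk0⟩ => ⟨fun h => hk (isUnit_algebraMap_sub_comp_of_swap B A hk0 h), hk0⟩)

end SwapComposition

open scoped ENNReal in
lemma spectralRadius_eq_of_spectrum_diff_zero_eq {𝕜 A B : Type*} [NormedField 𝕜] [Ring A]
    [Algebra 𝕜 A] [Ring B] [Algebra 𝕜 B] {a : A} {b : B}
    (h : spectrum 𝕜 a \ {0} = spectrum 𝕜 b \ {0}) : spectralRadius 𝕜 a = spectralRadius 𝕜 b := by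
  have hinsert : ∀ s : Set 𝕜,
      ⨆ k ∈ s, (‖k‖₊ : ℝ≥0∞) = ⨆ k ∈ insert 0 (s \ {0}), (‖k‖₊ : ℝ≥0∞) := fun s => by
    rw [insert_sdiff_singleton, iSup_insert, nnnorm_zero, ENNReal.coe_zero, ← bot_eq_zero,
      bot_sup_eq]
  rw [spectralRadius, spectralRadius, hinsert, hinsert (spectrum 𝕜 b), h]

lemma spectralRadius_comp_comm {𝕜 X Y : Type*} [NormedField 𝕜] [NormedAddCommGroup X]
    [NormedSpace 𝕜 X] [NormedAddCommGroup Y] [NormedSpace 𝕜 Y] (A : X →L[𝕜] Y) (B : Y →L[𝕜] X) :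
    spectralRadius 𝕜 (A ∘L B) = spectralRadius 𝕜 (B ∘L A) :=
  spectralRadius_eq_of_spectrum_diff_zero_eq (spectrum_comp_diff_zero_comm A B)

section Delay

variable {τ τ' : ℝ → ℝ}

lemma monotone_sub_of_hasDerivAt_le_one (hτ : ∀ t, HasDerivAt τ (τ' t) t) (hτ' : ∀ t, τ' t ≤ 1) :
    Monotone fun t => t - τ t :=
  monotone_of_hasDerivAt_nonneg (fun t => (hasDerivAt_id' t).sub (hτ t))
    fun t => sub_nonneg.2 (hτ' t)

lemma csSup_image_Icc_le_add (hτ : Monotone fun t => t - τ t) {w : ℝ} (hw : 0 ≤ w) :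
    sSup (τ '' Icc 0 w) ≤ w + τ 0 :=
  csSup_le ((nonempty_Icc.2 hw).image τ) <| forall_mem_image.2 fun t ht => by
    have := hτ ht.1
    dsimp only at this
    linarith [ht.2]

end Delay

section History

variable {r R : ℝ}

noncomputable def restrictHistory (h : r ≤ R) :
    (ℝ × C(Icc (-R) (0:ℝ), ℝ)) →L[ℝ] (ℝ × C(Icc (-r) (0:ℝ), ℝ)) :=
  (ContinuousLinearMap.id ℝ ℝ).prodMap
    (ContinuousMap.compCLM ℝ ℝ (ContinuousMap.inclusion (Icc_subset_Icc (neg_le_neg h) le_rfl)))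

noncomputable def extendHistory (R : ℝ) (h : 0 ≤ r) :
    (ℝ × C(Icc (-r) (0:ℝ), ℝ)) →L[ℝ] (ℝ × C(Icc (-R) (0:ℝ), ℝ)) :=
  (ContinuousLinearMap.id ℝ ℝ).prodMap
    (ContinuousMap.compCLM ℝ ℝ ⟨fun θ => projIcc (-r) 0 (neg_nonpos.2 h) θ,
      continuous_projIcc.comp continuous_subtype_val⟩)

lemma restrictHistory_comp_extendHistory (hrR : r ≤ R) (hr : 0 ≤ r) :
    restrictHistory hrR ∘L extendHistory R hr = ContinuousLinearMap.id ℝ _ :=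
  ContinuousLinearMap.ext fun v =>
    Prod.ext rfl (ContinuousMap.ext fun θ => congr_arg v.2 (projIcc_val (neg_nonpos.2 hr) θ))

end History

namespace IsLinMosqSol

variable {μb μl μm τl τl' Ls Sm : ℝ → ℝ} {r R : ℝ}

lemma mono (h : IsLinMosqSol μb μl μm τl τl' R Ls Sm) (hrR : r ≤ R) :
    IsLinMosqSol μb μl μm τl τl' r Ls Sm :=
  ⟨h.1, h.2.1.mono (Ici_subset_Ici.2 (neg_le_neg hrR)), h.2.2⟩

lemma comp_max (h : IsLinMosqSol μb μl μm τl τl' r Ls Sm) (hr : 0 ≤ r)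
    (hlag : ∀ t > 0, -r ≤ t - τl t) (R : ℝ) :
    IsLinMosqSol μb μl μm τl τl' R Ls (fun t => Sm (max (-r) t)) := by
  refine ⟨h.1, h.2.1.comp (continuous_const.max continuous_id).continuousOn
    (fun t _ => mem_Ici.2 (le_max_left (-r) t)), fun t ht => ?_⟩
  have ht' : -r < t := by linarith
  have hSm : (fun s => Sm (max (-r) s)) =ᶠ[nhds t] Sm :=
    (eventually_gt_nhds ht').mono fun s hs => by simp only [max_eq_right hs.le]
  obtain ⟨hLs, hSm'⟩ := h.2.2 t ht
  simp only [max_eq_right ht'.le, max_eq_right (hlag t ht)]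
  exact ⟨hLs, hSm'.congr_of_eventuallyEq hSm⟩

end IsLinMosqSol

namespace IsPoincareMap

variable {w : ℝ} {μb μl μm τl τl' : ℝ → ℝ} {r R : ℝ}
  {Q : (ℝ × C(Icc (-r) (0:ℝ), ℝ)) →L[ℝ] (ℝ × C(Icc (-r) (0:ℝ), ℝ))}
  {Qbar : (ℝ × C(Icc (-R) (0:ℝ), ℝ)) →L[ℝ] (ℝ × C(Icc (-R) (0:ℝ), ℝ))}

lemma comp_restrictHistory (hQ : IsPoincareMap w μb μl μm τl τl' r Q)
    (hQbar : IsPoincareMap w μb μl μm τl τl' R Qbar) (hrR : r ≤ R) :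
    Q ∘L restrictHistory hrR = restrictHistory hrR ∘L Qbar := by
  have hsub : Icc (-r) (0:ℝ) ⊆ Icc (-R) 0 := Icc_subset_Icc (neg_le_neg hrR) le_rfl
  refine ContinuousLinearMap.ext fun v => ?_
  obtain ⟨Ls, Sm, hsol, h0, hhist⟩ := hQbar.2 v
  obtain ⟨hQ1, hQ2⟩ := hQ.1 (restrictHistory hrR v) Ls Sm (hsol.mono hrR) h0
    fun θ => hhist ⟨θ, hsub θ.2⟩
  obtain ⟨hQbar1, hQbar2⟩ := hQbar.1 v Ls Sm hsol h0 hhist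
  exact Prod.ext (hQ1.trans hQbar1.symm)
    (ContinuousMap.ext fun θ => (hQ2 θ).trans (hQbar2 ⟨θ, hsub θ.2⟩).symm)

lemma comp_extendHistory_comp_restrictHistory (hQbar : IsPoincareMap w μb μl μm τl τl' R Qbar)
    (hrR : r ≤ R) (hr : 0 ≤ r) (hRw : R ≤ w + r) (hlag : ∀ t > 0, -r ≤ t - τl t) :
    Qbar ∘L extendHistory R hr ∘L restrictHistory hrR = Qbar := by
  have hsub : Icc (-r) (0:ℝ) ⊆ Icc (-R) 0 := Icc_subset_Icc (neg_le_neg hrR) le_rfl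
  refine ContinuousLinearMap.ext fun v => ?_
  obtain ⟨Ls, Sm, hsol, h0, hhist⟩ := hQbar.2 v
  have hhist' : ∀ θ : Icc (-R) (0:ℝ),
      Sm (max (-r) θ) = (extendHistory R hr (restrictHistory hrR v)).2 θ := fun θ => by
    rw [show max (-r) (θ : ℝ) = projIcc (-r) 0 (neg_nonpos.2 hr) θ by
      simp [coe_projIcc, θ.2.2]]
    exact hhist ⟨_, hsub (projIcc (-r) 0 (neg_nonpos.2 hr) θ).2⟩
  obtain ⟨hE1, hE2⟩ := hQbar.1 (extendHistory R hr (restrictHistory hrR v)) Ls _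
    ((hsol.mono hrR).comp_max hr hlag R) h0 hhist'
  obtain ⟨hQbar1, hQbar2⟩ := hQbar.1 v Ls Sm hsol h0 hhist
  refine Prod.ext (hE1.trans hQbar1.symm) (ContinuousMap.ext fun θ => (hE2 θ).trans ?_)
  rw [hQbar2, max_eq_right]
  linarith [θ.2.1]

end IsPoincareMap

theorem poincare_maps_same_spectral_radius_general
    (w : ℝ) (hw : 0 < w)
    (μb μl μm : ℝ → ℝ)
    (τl τl' : ℝ → ℝ)
    (hτl : (∀ t, HasDerivAt τl (τl' t) t) ∧ Continuous τl' ∧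
      (∀ t, 0 < τl t) ∧ Function.Periodic τl w ∧ (∀ t, τl' t < 1))
    (τbar : ℝ) (hτbar : τbar = sSup (τl '' Set.Icc 0 w))
    (Qbar : (ℝ × C(Set.Icc (-τbar) (0:ℝ), ℝ)) →L[ℝ] (ℝ × C(Set.Icc (-τbar) (0:ℝ), ℝ)))
    (hQbar : IsPoincareMap w μb μl μm τl τl' τbar Qbar)
    (Q : (ℝ × C(Set.Icc (-(τl 0)) (0:ℝ), ℝ)) →L[ℝ] (ℝ × C(Set.Icc (-(τl 0)) (0:ℝ), ℝ)))
    (hQ : IsPoincareMap w μb μl μm τl τl' (τl 0) Q) :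
    spectralRadius ℝ Qbar = spectralRadius ℝ Q ∧ spectralRadius ℝ Q ≠ ⊤ := by
  obtain ⟨hτ_deriv, -, hτ_pos, -, hτ'_lt⟩ := hτl
  have hlag := monotone_sub_of_hasDerivAt_le_one hτ_deriv fun t => (hτ'_lt t).le
  have hbdd : BddAbove (τl '' Icc 0 w) := (isCompact_Icc.image
    (continuous_iff_continuousAt.2 fun t => (hτ_deriv t).continuousAt)).bddAbove
  have hτ0 : τl 0 ≤ τbar := hτbar ▸ le_csSup hbdd (mem_image_of_mem τl ⟨le_rfl, hw.le⟩)
  have hr := (hτ_pos 0).le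
  have hQbar_eq : (Qbar ∘L extendHistory τbar hr) ∘L restrictHistory hτ0 = Qbar :=
    hQbar.comp_extendHistory_comp_restrictHistory hτ0 hr (hτbar ▸ csSup_image_Icc_le_add hlag hw.le)
      fun t ht => by simpa using hlag ht.le
  have hQ_eq : restrictHistory hτ0 ∘L (Qbar ∘L extendHistory τbar hr) = Q := by
    rw [← ContinuousLinearMap.comp_assoc, ← hQ.comp_restrictHistory hQbar hτ0,
      ContinuousLinearMap.comp_assoc, restrictHistory_comp_extendHistory,
      ContinuousLinearMap.comp_id]
  refine ⟨?_, ne_top_of_le_ne_top ENNReal.coe_ne_top (spectrum.spectralRadius_le_nnnorm (𝕜 := ℝ) Q)⟩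
  rw [← hQbar_eq, ← hQ_eq]
  exact spectralRadius_comp_comm _ _

theorem poincare_maps_same_spectral_radius
    (w : ℝ) (hw : 0 < w)
    (μb μl μm K : ℝ → ℝ)
    (hμb : Continuous μb ∧ (∀ t, 0 < μb t) ∧ Function.Periodic μb w)
    (hμl : Continuous μl ∧ (∀ t, 0 < μl t) ∧ Function.Periodic μl w)
    (hμm : Continuous μm ∧ (∀ t, 0 < μm t) ∧ Function.Periodic μm w)
    (hK : Continuous K ∧ (∀ t, 0 < K t) ∧ Function.Periodic K w)
    (τl τl' : ℝ → ℝ)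
    (hτl : (∀ t, HasDerivAt τl (τl' t) t) ∧ Continuous τl' ∧
      (∀ t, 0 < τl t) ∧ Function.Periodic τl w ∧ (∀ t, τl' t < 1))
    (τbar : ℝ) (hτbar : τbar = sSup (τl '' Set.Icc 0 w))
    (Qbar : (ℝ × C(Set.Icc (-τbar) (0:ℝ), ℝ)) →L[ℝ] (ℝ × C(Set.Icc (-τbar) (0:ℝ), ℝ)))
    (hQbar : IsPoincareMap w μb μl μm τl τl' τbar Qbar)
    (Q : (ℝ × C(Set.Icc (-(τl 0)) (0:ℝ), ℝ)) →L[ℝ] (ℝ × C(Set.Icc (-(τl 0)) (0:ℝ), ℝ)))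
    (hQ : IsPoincareMap w μb μl μm τl τl' (τl 0) Q) :
    spectralRadius ℝ Qbar = spectralRadius ℝ Q ∧ spectralRadius ℝ Q ≠ ⊤ :=
  poincare_maps_same_spectral_radius_general w hw μb μl μm τl τl' hτl τbar hτbar Qbar hQbar Q hQ
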